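/- arXiv:2409.10075 — 3 statements merged into one kernel-verified Lean document; each statement's English description precedes it below -/
import Mathlib

section
/- For every z : Fin n → ℝ, the discrete Hilbert transform H z is real-valued; that is, the imaginary part of (H z)(m) is 0 for every m. -/
/-- The discrete Fourier transform of a real signal `z : Fin n → ℝ`:
`(F z)(b) = ∑ m, z m · exp(−2πi·b·m/n)`. -/
noncomputable def dft (n : ℕ) (z : Fin n → ℝ) (b : Fin n) : ℂ :=
  ∑ m : Fin n, (z m : ℂ) *
    Complex.exp (-(2 * (Real.pi : ℂ) * Complex.I * ((b : ℕ) : ℂ) * ((m : ℕ) : ℂ)) / (n : ℂ))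

/-- The Hilbert multiplier: `μ(b) = 1` if `b = 0` or `b = n/2`, `μ(b) = −i` if `0 < b < n/2`,
and `μ(b) = i` if `n/2 < b < n`. -/
noncomputable def hilbertMul (n : ℕ) (b : Fin n) : ℂ :=
  if (b : ℕ) = 0 ∨ (b : ℕ) = n / 2 then 1
  else if (b : ℕ) < n / 2 then -Complex.I
  else Complex.I

/-- The discrete Hilbert transform of a real signal `z : Fin n → ℝ`:
`(H z)(m) = (1/n) · ∑ b, μ(b) · (F z)(b) · exp(2πi·b·m/n)`. -/
noncomputable def dht (n : ℕ) (z : Fin n → ℝ) (m : Fin n) : ℂ :=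
  (1 / (n : ℂ)) * ∑ b : Fin n, hilbertMul n b * dft n z b *
    Complex.exp (2 * (Real.pi : ℂ) * Complex.I * ((b : ℕ) : ℂ) * ((m : ℕ) : ℂ) / (n : ℂ))

/-!
The DFT of a real signal is Hermitian: `conj ((F z) b) = (F z) (-b)`. For even `n` the multiplier
`μ` is Hermitian too, since `b ↦ -b` fixes `0` and `n/2` and swaps the two halves on which
`μ = ∓i`. The inverse DFT of a Hermitian sequence is real, because conjugating its defining sum
permutes the terms by `b ↦ -b`.
-/

open Complex ComplexConjugate Real

section
variable {n : ℕ}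

lemma Fin.natCast_val_neg (b : Fin n) : (((-b : Fin n) : ℕ) : ZMod n) = -((b : ℕ) : ZMod n) := by
  rw [Fin.val_neg', ZMod.natCast_mod, Nat.cast_sub b.isLt.le, ZMod.natCast_self, zero_sub]

variable [NeZero n]

lemma exp_two_pi_I_mul_div_eq_stdAddChar (b m : ℕ) :
    exp (2 * π * I * b * m / n) = ZMod.stdAddChar (b * m : ZMod n) := by
  have h := ZMod.stdAddChar_coe (N := n) (b * m)
  push_cast at h
  rw [h]
  ring_nf

lemma exp_neg_two_pi_I_mul_div_eq_conj_stdAddChar (b m : ℕ) :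
    exp (-(2 * π * I * b * m) / n) = conj (ZMod.stdAddChar (b * m : ZMod n)) := by
  have h := ZMod.stdAddChar_coe (N := n) (-(b * m))
  push_cast at h
  rw [← AddChar.map_neg_eq_conj, h]
  ring_nf

lemma conj_dft (z : Fin n → ℝ) (b : Fin n) : conj (dft n z b) = dft n z (-b) := by
  unfold dft
  simp_rw [exp_neg_two_pi_I_mul_div_eq_conj_stdAddChar, map_sum, map_mul, conj_ofReal,
    Fin.natCast_val_neg, neg_mul, AddChar.map_neg_eq_conj]

lemma conj_hilbertMul (hn : Even n) (b : Fin n) : conj (hilbertMul n b) = hilbertMul n (-b) := by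
  obtain rfl | hb := eq_or_ne b 0
  · simp [hilbertMul]
  have hb0 : (b : ℕ) ≠ 0 := Fin.val_ne_zero_iff.mpr hb
  have hneg : ((-b : Fin n) : ℕ) = n - b := by rw [Fin.val_neg, if_neg hb]
  have hbn := b.isLt
  obtain ⟨k, rfl⟩ := hn
  unfold hilbertMul
  rw [hneg]
  split_ifs <;> first | omega | simp

lemma conj_sum_mul_addChar_eq_self (ψ : AddChar (ZMod n) ℂ) {X : Fin n → ℂ}
    (hX : ∀ b, conj (X b) = X (-b)) (m : Fin n) :
    conj (∑ b, X b * ψ ((b : ℕ) * (m : ℕ))) = ∑ b, X b * ψ ((b : ℕ) * (m : ℕ)) := by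
  rw [map_sum]
  refine Fintype.sum_equiv (Equiv.neg (Fin n)) _ _ fun b => ?_
  rw [map_mul, hX, ← AddChar.map_neg_eq_conj, ← neg_mul, ← Fin.natCast_val_neg, Equiv.neg_apply]

end

theorem dht_im_eq_zero_general (n : ℕ) (hne : Even n)
    (z : Fin n → ℝ) (m : Fin n) : (dht n z m).im = 0 := by
  have : NeZero n := NeZero.of_pos m.pos
  have hX (b : Fin n) : conj (hilbertMul n b * dft n z b) = hilbertMul n (-b) * dft n z (-b) := by
    rw [map_mul, conj_hilbertMul hne, conj_dft]
  rw [← conj_eq_iff_im, dht]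
  simp_rw [exp_two_pi_I_mul_div_eq_stdAddChar]
  rw [map_mul, conj_sum_mul_addChar_eq_self _ hX, map_div₀, map_one, map_natCast]

/-- The discrete Hilbert transform of a real signal is real-valued. -/
theorem dht_im_eq_zero (n : ℕ) (hn : 0 < n) (hne : Even n)
    (z : Fin n → ℝ) (m : Fin n) : (dht n z m).im = 0 :=
  dht_im_eq_zero_general n hne z m
end

section
/- Let Z_R be a random vector on a probability space taking values in ℝ^n (n a positive even integer) with integrable coordinate products, such that almost surely (F Z_R)(0) = 0 and (F Z_R)(n/2) = 0, and define the random vector Z_I by Z_I(m) = Re((H Z_R)(m)). Then E[∑_{m=0}^{n−1} Z_R(m)·Z_I(m)] = 0; that is, Z_R and Z_I = H{Z_R} are orthogonal in the expectation inner product. -/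
/-!
Summing against `z` turns the Hilbert transform into a Parseval-type sum: `⟨z, H z⟩` is
`(1/n) ∑_b μ(b) |(F z)(b)|²`. The multiplier is purely imaginary except at `b = 0` and
`b = n/2`, where `F z` vanishes, so every term has real part zero. Hence the integrand vanishes
almost surely.
-/

open MeasureTheory

lemma conj_dft_s8 (n : ℕ) (z : Fin n → ℝ) (b : Fin n) :
    (starRingEnd ℂ) (dft n z b) = ∑ m : Fin n, (z m : ℂ) *
      Complex.exp (2 * (Real.pi : ℂ) * Complex.I * ((b : ℕ) : ℂ) * ((m : ℕ) : ℂ) / (n : ℂ)) := by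
  rw [dft, map_sum]
  refine Finset.sum_congr rfl fun m _ => ?_
  rw [map_mul, Complex.conj_ofReal, ← Complex.exp_conj]
  congr 2
  simp only [map_div₀, map_neg, map_mul, Complex.conj_I, Complex.conj_ofReal,
    Complex.conj_natCast, map_ofNat]
  ring

lemma sum_mul_dht (n : ℕ) (z : Fin n → ℝ) :
    ∑ m : Fin n, (z m : ℂ) * dht n z m
      = (1 / (n : ℂ)) * ∑ b : Fin n, hilbertMul n b * (Complex.normSq (dft n z b) : ℂ) := by
  simp only [dht, ← Complex.mul_conj, conj_dft_s8, Finset.mul_sum]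
  rw [Finset.sum_comm]
  refine Finset.sum_congr rfl fun b _ => Finset.sum_congr rfl fun m _ => ?_
  ring

lemma hilbertMul_re_eq_zero (n : ℕ) {b : Fin n} (hb : (b : ℕ) ≠ 0) (hb' : (b : ℕ) ≠ n / 2) :
    (hilbertMul n b).re = 0 := by
  rw [hilbertMul, if_neg (not_or.2 ⟨hb, hb'⟩)]
  split_ifs <;> simp

lemma sum_mul_re_dht_eq_zero (n : ℕ) (hn : 0 < n) (z : Fin n → ℝ)
    (h0 : dft n z ⟨0, hn⟩ = 0)
    (hhalf : dft n z ⟨n / 2, Nat.div_lt_self hn one_lt_two⟩ = 0) :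
    ∑ m : Fin n, z m * (dht n z m).re = 0 := by
  have hterm : ∀ b : Fin n, (hilbertMul n b).re * Complex.normSq (dft n z b) = 0 := by
    intro b
    by_cases hb : (b : ℕ) = 0
    · rw [show b = ⟨0, hn⟩ from Fin.ext hb, h0, map_zero, mul_zero]
    by_cases hb' : (b : ℕ) = n / 2
    · rw [show b = ⟨n / 2, Nat.div_lt_self hn one_lt_two⟩ from Fin.ext hb', hhalf, map_zero,
        mul_zero]
    rw [hilbertMul_re_eq_zero n hb hb', zero_mul]
  calc ∑ m : Fin n, z m * (dht n z m).re
      = (∑ m : Fin n, (z m : ℂ) * dht n z m).re := by simp [Complex.re_sum]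
    _ = (1 / n) * ∑ b : Fin n, (hilbertMul n b).re * Complex.normSq (dft n z b) := by
        rw [sum_mul_dht, ← Complex.ofReal_natCast, ← Complex.ofReal_one, ← Complex.ofReal_div,
          Complex.re_ofReal_mul, Complex.re_sum]
        simp_rw [Complex.re_mul_ofReal]
    _ = 0 := by simp [hterm]

theorem expectation_inner_dht_eq_zero_general {Ω : Type*} [MeasurableSpace Ω]
    (μ : Measure Ω) (n : ℕ) (hn : 0 < n)
    (ZR : Ω → Fin n → ℝ)
    (h0 : ∀ᵐ ω ∂μ, dft n (ZR ω) ⟨0, hn⟩ = 0)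
    (hhalf : ∀ᵐ ω ∂μ, dft n (ZR ω) ⟨n / 2, Nat.div_lt_self hn one_lt_two⟩ = 0)
    (ZI : Ω → Fin n → ℝ) (hZI : ∀ ω m, ZI ω m = (dht n (ZR ω) m).re) :
    ∫ ω, (∑ m : Fin n, ZR ω m * ZI ω m) ∂μ = 0 := by
  have hae : (fun ω => ∑ m : Fin n, ZR ω m * ZI ω m) =ᵐ[μ] fun _ => 0 := by
    filter_upwards [h0, hhalf] with ω h0ω hhalfω
    simpa only [hZI] using sum_mul_re_dht_eq_zero n hn (ZR ω) h0ω hhalfω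
  rw [integral_congr_ae hae, integral_zero]

/-- Let `Z_R` be a random vector in `ℝⁿ` with integrable coordinate products whose DFT
vanishes almost surely at frequencies `0` and `n/2`, and let `Z_I = H{Z_R}` be its
(real-valued) discrete Hilbert transform. Then `E[∑ m, Z_R(m)·Z_I(m)] = 0`, i.e. `Z_R` and
`Z_I` are orthogonal in the expectation inner product. -/
theorem expectation_inner_dht_eq_zero {Ω : Type*} [MeasurableSpace Ω]
    (μ : Measure Ω) [IsProbabilityMeasure μ] (n : ℕ) (hn : 0 < n) (hne : Even n)
    (ZR : Ω → Fin n → ℝ)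
    (hint : ∀ i j : Fin n, Integrable (fun ω => ZR ω i * ZR ω j) μ)
    (h0 : ∀ᵐ ω ∂μ, dft n (ZR ω) ⟨0, hn⟩ = 0)
    (hhalf : ∀ᵐ ω ∂μ, dft n (ZR ω) ⟨n / 2, Nat.div_lt_self hn one_lt_two⟩ = 0)
    (ZI : Ω → Fin n → ℝ) (hZI : ∀ ω m, ZI ω m = (dht n (ZR ω) m).re) :
    ∫ ω, (∑ m : Fin n, ZR ω m * ZI ω m) ∂μ = 0 :=
  expectation_inner_dht_eq_zero_general μ n hn ZR h0 hhalf ZI hZI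
end

section
/- Let X_R, X_I, Y, θ_f, θ_g, S be finite-valued random variables, let g, f be functions, and set Z_R = g(X_R), Z_I = f(X_I), X = (X_R, X_I), Z = (Z_R, Z_I), θ_ψ = (θ_f, θ_g). Assume that for a natural number M ≥ 1 the sample S satisfies the i.i.d. entropy identities H(S) = M·H(X, Y) and H(S | θ_ψ) = M·H(X, Y | θ_ψ). Then the Steinmetz objective J = I(X ; Z) − I(Y ; Z) + I(S ; θ_ψ) satisfies J ≥ D, where D = H(Z_R) − I(Y ; Z) + M·[H(Y) + H(X_R | Y) + H(X_I | X_R, Z_I, Y) − H(X | θ_ψ) − H(Y | X, θ_g)]. Moreover, if there exists a function φ with Z_I = φ(Z_R) almost surely and θ_f is almost surely equal to a function of (X, θ_g), then J = D. -/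
/-!
Because `Z` is a function of `X`, `I(X;Z) = H(Z)`, and the sample identities turn `I(S;θ_ψ)` into
`M·(H(X,Y) − H(X,Y|θ_ψ))`. Expanding both sides with the chain rule gives
`J − D = [H(Z) − H(Z_R)] + M·([H(X_R,Z_I,Y) − H(X_R,Y)] + [H(Y|X,θ_g) − H(Y|X,θ_ψ)])`.
Each bracket is nonnegative: forgetting a coordinate cannot increase entropy, and coarsening the
conditioning variable cannot decrease conditional entropy (log-sum inequality). Each bracket
vanishes when the forgotten coordinate is almost surely a function of the remaining ones.
-/

open MeasureTheory

/-- The Shannon entropy of a finite-valued random variable: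
`H(X) = −∑ x, P(X = x)·log P(X = x)` (with `0·log 0 = 0`). -/
noncomputable def entropy {Ω α : Type*} [MeasurableSpace Ω] [Fintype α]
    (μ : Measure Ω) (X : Ω → α) : ℝ :=
  ∑ x : α, Real.negMulLog ((μ (X ⁻¹' {x})).toReal)

/-- Conditional entropy `H(X | Y) = H(X, Y) − H(Y)`. -/
noncomputable def condEntropy {Ω α β : Type*} [MeasurableSpace Ω] [Fintype α] [Fintype β]
    (μ : Measure Ω) (X : Ω → α) (Y : Ω → β) : ℝ :=
  entropy μ (fun ω => (X ω, Y ω)) - entropy μ Y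

/-- Mutual information `I(X ; Y) = H(X) + H(Y) − H(X, Y)`. -/
noncomputable def mutualInfo {Ω α β : Type*} [MeasurableSpace Ω] [Fintype α] [Fintype β]
    (μ : Measure Ω) (X : Ω → α) (Y : Ω → β) : ℝ :=
  entropy μ X + entropy μ Y - entropy μ (fun ω => (X ω, Y ω))

open Real Finset

lemma negMulLog_sum_le {ι : Type*} (s : Finset ι) {p : ι → ℝ} (hp : ∀ i ∈ s, 0 ≤ p i) :
    negMulLog (∑ i ∈ s, p i) ≤ ∑ i ∈ s, negMulLog (p i) := by
  calc negMulLog (∑ i ∈ s, p i) = ∑ i ∈ s, -p i * log (∑ j ∈ s, p j) := by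
        rw [negMulLog, ← sum_mul, sum_neg_distrib]
    _ ≤ ∑ i ∈ s, negMulLog (p i) := by
        refine sum_le_sum fun i hi => ?_
        rcases (hp i hi).eq_or_lt with h | h
        · simp [← h]
        · exact mul_le_mul_of_nonpos_left (log_le_log h (single_le_sum hp hi))
            (neg_nonpos.2 h.le)

lemma mul_log_div_le_of_pos {r s R S : ℝ} (hr : 0 < r) (hs : 0 < s) (hR : 0 < R) (hS : 0 < S) :
    r * log (s / r) ≤ r * log (S / R) + s * R / S - r := by
  have h := log_le_sub_one_of_pos (div_pos (div_pos hs hr) (div_pos hS hR))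
  rw [log_div (by positivity) (by positivity)] at h
  calc r * log (s / r) = r * log (S / R) + r * (log (s / r) - log (S / R)) := by ring
    _ ≤ r * log (S / R) + r * (s / r / (S / R) - 1) := by gcongr
    _ = r * log (S / R) + s * R / S - r := by field_simp; ring

lemma sum_mul_log_div_le {ι : Type*} (I : Finset ι) {r s : ι → ℝ} (hr : ∀ i ∈ I, 0 ≤ r i)
    (hrs : ∀ i ∈ I, r i ≤ s i) :
    ∑ i ∈ I, r i * log (s i / r i) ≤ (∑ i ∈ I, r i) * log ((∑ i ∈ I, s i) / ∑ i ∈ I, r i) := by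
  rcases (sum_nonneg hr).eq_or_lt with hR | hR
  · have hr0 := (sum_eq_zero_iff_of_nonneg hr).1 hR.symm
    rw [← hR, zero_mul]
    exact (sum_eq_zero fun i hi => by simp [hr0 i hi]).le
  set R := ∑ i ∈ I, r i
  set S := ∑ i ∈ I, s i
  have hS : 0 < S := hR.trans_le (sum_le_sum hrs)
  calc ∑ i ∈ I, r i * log (s i / r i)
      ≤ ∑ i ∈ I, (r i * log (S / R) + s i * R / S - r i) := by
        refine sum_le_sum fun i hi => ?_
        rcases (hr i hi).eq_or_lt with h | h
        · have := hrs i hi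
          rw [← h] at this ⊢
          simp only [zero_mul, sub_zero, zero_add]
          positivity
        · exact mul_log_div_le_of_pos h (h.trans_le (hrs i hi)) hR hS
    _ = R * log (S / R) := by
        rw [sum_sub_distrib, sum_add_distrib, ← sum_mul, ← sum_div, ← sum_mul]
        field_simp
        ring

lemma sum_negMulLog_sub_sum_negMulLog_marginal {α β : Type*} [Fintype α] [Fintype β]
    {r : α × β → ℝ} (hr : ∀ p, 0 ≤ r p) :
    ∑ p, negMulLog (r p) - ∑ w, negMulLog (∑ y, r (y, w))
      = ∑ p, r p * log ((∑ y, r (y, p.2)) / r p) := by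
  have hterm : ∀ p : α × β, r p * log ((∑ y, r (y, p.2)) / r p)
      = negMulLog (r p) + r p * log (∑ y, r (y, p.2)) := fun p => by
    rcases (hr p).eq_or_lt with h | h
    · simp [← h]
    have hmarg : 0 < ∑ y, r (y, p.2) :=
      h.trans_le (single_le_sum (fun y _ => hr (y, p.2)) (mem_univ p.1))
    rw [log_div hmarg.ne' h.ne', negMulLog]
    ring
  have hmarg : ∑ w, negMulLog (∑ y, r (y, w)) = -∑ p, r p * log (∑ y, r (y, p.2)) := by
    simp only [Fintype.sum_prod_type_right, negMulLog, ← sum_mul, neg_mul, sum_neg_distrib]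
  rw [sum_congr rfl fun p _ => hterm p, sum_add_distrib, hmarg]
  ring

/-- Coarsening the conditioning variable cannot decrease conditional entropy, in terms of a joint
mass function `r` and its image `t` under `(y, w) ↦ (y, k w)`. -/
lemma sum_mul_log_marginal_div_le_of_comp {α β γ : Type*} [Fintype α] [Fintype β] [Fintype γ]
    [DecidableEq γ] {r : α × β → ℝ} {t : α × γ → ℝ} (hr : ∀ p, 0 ≤ r p) (k : β → γ)
    (ht : ∀ y c, t (y, c) = ∑ w with k w = c, r (y, w)) :
    ∑ p, r p * log ((∑ y, r (y, p.2)) / r p) ≤ ∑ q, t q * log ((∑ y, t (y, q.2)) / t q) := by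
  calc ∑ p, r p * log ((∑ y, r (y, p.2)) / r p)
      = ∑ y, ∑ c, ∑ w with k w = c, r (y, w) * log ((∑ y', r (y', w)) / r (y, w)) := by
        rw [Fintype.sum_prod_type]
        exact sum_congr rfl fun y _ => (sum_fiberwise _ k _).symm
    _ ≤ ∑ y, ∑ c, t (y, c) * log ((∑ y', t (y', c)) / t (y, c)) := by
        refine sum_le_sum fun y _ => sum_le_sum fun c _ => ?_
        have hsum : ∑ w with k w = c, ∑ y', r (y', w) = ∑ y', t (y', c) := by
          rw [sum_comm]
          simp only [ht]
        rw [ht, ← hsum]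
        exact sum_mul_log_div_le _ (fun w _ => hr (y, w))
          fun w _ => single_le_sum (fun y' _ => hr (y', w)) (mem_univ y)
    _ = ∑ q, t q * log ((∑ y, t (y, q.2)) / t q) := by rw [Fintype.sum_prod_type]

section RandomVariables

variable {Ω α β γ : Type*} [MeasurableSpace Ω] {μ : Measure Ω}

lemma entropy_eq_sum_measureReal [Fintype α] (X : Ω → α) :
    entropy μ X = ∑ x, negMulLog (μ.real (X ⁻¹' {x})) := rfl

lemma entropy_congr_ae [Fintype α] {X X' : Ω → α} (h : X =ᵐ[μ] X') :
    entropy μ X = entropy μ X' :=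
  sum_congr rfl fun x _ => by rw [measure_congr (h.preimage {x})]

lemma entropy_comp_of_injective [Fintype α] [Fintype β] (X : Ω → α) {e : α → β}
    (he : Function.Injective e) : entropy μ (fun ω => e (X ω)) = entropy μ X := by
  refine (Fintype.sum_of_injective e he _ _ (fun b hb => ?_) fun a => ?_).symm
  · have : (fun ω => e (X ω)) ⁻¹' {b} = ∅ :=
      Set.eq_empty_of_forall_notMem fun ω hω => hb ⟨X ω, hω⟩
    simp [this]
  · simp only [Set.preimage, Set.mem_singleton_iff, he.eq_iff]

lemma entropy_eq_of_ae_eq_comp [Fintype α] [Fintype β] {X : Ω → α} {X' : Ω → β} {e : α → β}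
    (h : ∀ᵐ ω ∂μ, X' ω = e (X ω)) (he : Function.Injective e) : entropy μ X' = entropy μ X :=
  (entropy_congr_ae h).trans (entropy_comp_of_injective X he)

lemma condEntropy_eq_of_ae_eq_comp [Fintype α] [Fintype β] [Fintype γ] (Y : Ω → γ)
    {W : Ω → α} {W' : Ω → β} {e : α → β} (h : ∀ᵐ ω ∂μ, W' ω = e (W ω))
    (he : Function.Injective e) : condEntropy μ Y W' = condEntropy μ Y W := by
  have hpair : ∀ᵐ ω ∂μ, (Y ω, W' ω) = Prod.map id e (Y ω, W ω) :=
    h.mono fun ω hω => by rw [hω]; rfl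
  rw [condEntropy, condEntropy, entropy_eq_of_ae_eq_comp hpair (Function.injective_id.prodMap he),
    entropy_eq_of_ae_eq_comp h he]

variable [IsFiniteMeasure μ]

lemma entropy_comp_le [Fintype α] [Fintype β] {X : Ω → α} (hX : ∀ s, MeasurableSet (X ⁻¹' s))
    (k : α → β) : entropy μ (fun ω => k (X ω)) ≤ entropy μ X := by
  classical
  have hmeaser : ∀ b, μ.real ((fun ω => k (X ω)) ⁻¹' {b})
      = ∑ a with k a = b, μ.real (X ⁻¹' {a}) := fun b => by
    rw [sum_measureReal_preimage_singleton _ fun a _ => hX {a}]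
    congr 1
    ext ω
    simp
  simp only [entropy_eq_sum_measureReal]
  calc ∑ b, negMulLog (μ.real ((fun ω => k (X ω)) ⁻¹' {b}))
      ≤ ∑ b, ∑ a with k a = b, negMulLog (μ.real (X ⁻¹' {a})) := by
        refine sum_le_sum fun b _ => ?_
        rw [hmeaser]
        exact negMulLog_sum_le _ fun _ _ => measureReal_nonneg
    _ = ∑ a, negMulLog (μ.real (X ⁻¹' {a})) := sum_fiberwise _ _ _

noncomputable def jointMass (μ : Measure Ω) (Y : Ω → α) (W : Ω → β) (p : α × β) : ℝ :=
  μ.real ((fun ω => (Y ω, W ω)) ⁻¹' {p})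

variable {Y : Ω → α} {W : Ω → β}

lemma measureReal_preimage_singleton_eq_sum_jointMass [Fintype α] [Fintype β]
    (hYW : ∀ s, MeasurableSet ((fun ω => (Y ω, W ω)) ⁻¹' s)) (w : β) :
    μ.real (W ⁻¹' {w}) = ∑ y, jointMass μ Y W (y, w) := by
  classical
  have hset : W ⁻¹' {w} = (fun ω => (Y ω, W ω)) ⁻¹' ↑(univ ×ˢ {w} : Finset (α × β)) := by
    ext ω
    simp [eq_comm]
  rw [hset, ← sum_measureReal_preimage_singleton _ fun p _ => hYW {p}, sum_product]
  simp only [sum_singleton, jointMass]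

lemma jointMass_comp [Fintype β] [DecidableEq γ]
    (hYW : ∀ s, MeasurableSet ((fun ω => (Y ω, W ω)) ⁻¹' s)) (k : β → γ) (y : α) (c : γ) :
    jointMass μ Y (fun ω => k (W ω)) (y, c) = ∑ w with k w = c, jointMass μ Y W (y, w) := by
  classical
  have hset : (fun ω => (Y ω, k (W ω))) ⁻¹' {(y, c)}
      = (fun ω => (Y ω, W ω)) ⁻¹' ↑({y} ×ˢ univ.filter (k · = c) : Finset (α × β)) := by
    ext ω
    simp [eq_comm, and_comm]
  rw [jointMass, hset, ← sum_measureReal_preimage_singleton _ fun p _ => hYW {p}, sum_product,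
    sum_singleton]
  rfl

lemma condEntropy_eq_sum_jointMass_mul_log [Fintype α] [Fintype β]
    (hYW : ∀ s, MeasurableSet ((fun ω => (Y ω, W ω)) ⁻¹' s)) :
    condEntropy μ Y W = ∑ p, jointMass μ Y W p *
      log ((∑ y, jointMass μ Y W (y, p.2)) / jointMass μ Y W p) := by
  rw [condEntropy, entropy_eq_sum_measureReal, entropy_eq_sum_measureReal]
  simp only [measureReal_preimage_singleton_eq_sum_jointMass hYW]
  exact sum_negMulLog_sub_sum_negMulLog_marginal fun _ => measureReal_nonneg

lemma condEntropy_le_condEntropy_comp [Fintype α] [Fintype β] [Fintype γ]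
    (hYW : ∀ s, MeasurableSet ((fun ω => (Y ω, W ω)) ⁻¹' s)) (k : β → γ) :
    condEntropy μ Y W ≤ condEntropy μ Y (fun ω => k (W ω)) := by
  classical
  rw [condEntropy_eq_sum_jointMass_mul_log hYW,
    condEntropy_eq_sum_jointMass_mul_log (Y := Y) (W := fun ω => k (W ω))
      fun s => hYW (Prod.map id k ⁻¹' s)]
  exact sum_mul_log_marginal_div_le_of_comp (fun _ => measureReal_nonneg) k (jointMass_comp hYW k)

end RandomVariables

theorem steinmetz_lower_bound_general {Ω A B C A' B' Tf Tg Ts : Type*} [MeasurableSpace Ω]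
    [Fintype A] [Fintype B] [Fintype C] [Fintype A'] [Fintype B']
    [Fintype Tf] [Fintype Tg] [Fintype Ts]
    [MeasurableSpace A] [DiscreteMeasurableSpace A] [MeasurableSpace B] [DiscreteMeasurableSpace B]
    [MeasurableSpace C] [DiscreteMeasurableSpace C]
    [MeasurableSpace Tf] [DiscreteMeasurableSpace Tf]
    [MeasurableSpace Tg] [DiscreteMeasurableSpace Tg]
    (μ : Measure Ω) [IsProbabilityMeasure μ]
    (XR : Ω → A) (XI : Ω → B) (Y : Ω → C) (θf : Ω → Tf) (θg : Ω → Tg) (S : Ω → Ts)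
    (hXR : Measurable XR) (hXI : Measurable XI) (hY : Measurable Y)
    (hθf : Measurable θf) (hθg : Measurable θg)
    (g : A → A') (f : B → B') (M : ℕ) :
    let ZR : Ω → A' := fun ω => g (XR ω)
    let ZI : Ω → B' := fun ω => f (XI ω)
    let X : Ω → A × B := fun ω => (XR ω, XI ω)
    let Z : Ω → A' × B' := fun ω => (ZR ω, ZI ω)
    let θψ : Ω → Tf × Tg := fun ω => (θf ω, θg ω)
    let J : ℝ := mutualInfo μ X Z - mutualInfo μ Y Z + mutualInfo μ S θψ
    let D : ℝ := entropy μ ZR - mutualInfo μ Y Z +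
      (M : ℝ) * (entropy μ Y + condEntropy μ XR Y +
        condEntropy μ XI (fun ω => (XR ω, ZI ω, Y ω)) -
        condEntropy μ X θψ - condEntropy μ Y (fun ω => (X ω, θg ω)))
    entropy μ S = (M : ℝ) * entropy μ (fun ω => (X ω, Y ω)) →
    condEntropy μ S θψ = (M : ℝ) * condEntropy μ (fun ω => (X ω, Y ω)) θψ →
    D ≤ J ∧
      ((∃ φ : A' → B', ∀ᵐ ω ∂μ, ZI ω = φ (ZR ω)) →
       (∃ h : (A × B) × Tg → Tf, ∀ᵐ ω ∂μ, θf ω = h (X ω, θg ω)) →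
       J = D) := by
  intro ZR ZI X Z θψ J D hS hSθ
  have hmeas : ∀ s, MeasurableSet ((fun ω => (Y ω, X ω, θψ ω)) ⁻¹' s) := fun s =>
    (hY.prodMk ((hXR.prodMk hXI).prodMk (hθf.prodMk hθg))) MeasurableSet.of_discrete
  have hXZ : entropy μ (fun ω => (X ω, Z ω)) = entropy μ X :=
    entropy_comp_of_injective X (e := fun x => (x, g x.1, f x.2))
      (Function.LeftInverse.injective (g := Prod.fst) fun _ => rfl)
  have hXY : entropy μ (fun ω => (XI ω, XR ω, ZI ω, Y ω)) = entropy μ (fun ω => (X ω, Y ω)) :=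
    entropy_comp_of_injective (fun ω => (X ω, Y ω)) (e := fun p => (p.1.2, p.1.1, f p.1.2, p.2))
      (Function.LeftInverse.injective (g := fun q => ((q.2.1, q.1), q.2.2.2)) fun _ => rfl)
  have hXYθ : entropy μ (fun ω => (Y ω, X ω, θψ ω)) = entropy μ (fun ω => ((X ω, Y ω), θψ ω)) :=
    entropy_comp_of_injective (fun ω => ((X ω, Y ω), θψ ω)) (e := fun p => (p.1.2, p.1.1, p.2))
      (Function.LeftInverse.injective (g := fun q => ((q.2.1, q.1), q.2.2)) fun _ => rfl)
  have hgap : J - D = (entropy μ Z - entropy μ ZR) +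
      M * ((entropy μ (fun ω => (XR ω, ZI ω, Y ω)) - entropy μ (fun ω => (XR ω, Y ω))) +
        (condEntropy μ Y (fun ω => (X ω, θg ω)) - condEntropy μ Y (fun ω => (X ω, θψ ω)))) := by
    simp only [J, D, mutualInfo, condEntropy] at hSθ ⊢
    linear_combination hS - hSθ - hXZ - (M : ℝ) * hXY + (M : ℝ) * hXYθ
  have hZR : entropy μ ZR ≤ entropy μ Z :=
    entropy_comp_le (X := Z) (fun s => hmeas ((fun v => (g v.2.1.1, f v.2.1.2)) ⁻¹' s)) Prod.fst
  have hZI : entropy μ (fun ω => (XR ω, Y ω)) ≤ entropy μ (fun ω => (XR ω, ZI ω, Y ω)) :=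
    entropy_comp_le (X := fun ω => (XR ω, ZI ω, Y ω))
      (fun s => hmeas ((fun v => (v.2.1.1, f v.2.1.2, v.1)) ⁻¹' s)) fun q => (q.1, q.2.2)
  have hθ : condEntropy μ Y (fun ω => (X ω, θψ ω)) ≤ condEntropy μ Y (fun ω => (X ω, θg ω)) :=
    condEntropy_le_condEntropy_comp hmeas fun w => (w.1, w.2.2)
  refine ⟨?_, fun ⟨φ, hφ⟩ ⟨h, hh⟩ => ?_⟩
  · have := mul_nonneg M.cast_nonneg (add_nonneg (sub_nonneg.2 hZI) (sub_nonneg.2 hθ))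
    linarith
  have hZ_eq : entropy μ Z = entropy μ ZR :=
    entropy_eq_of_ae_eq_comp (e := fun a => (a, φ a))
      (hφ.mono fun ω hω => congrArg (Prod.mk (ZR ω)) hω)
      (Function.LeftInverse.injective (g := Prod.fst) fun _ => rfl)
  have hZI_eq : entropy μ (fun ω => (XR ω, ZI ω, Y ω)) = entropy μ (fun ω => (XR ω, Y ω)) :=
    entropy_eq_of_ae_eq_comp (e := fun p => (p.1, φ (g p.1), p.2))
      (hφ.mono fun ω hω => congrArg (fun b => (XR ω, b, Y ω)) hω)
      (Function.LeftInverse.injective (g := fun q => (q.1, q.2.2)) fun _ => rfl)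
  have hθ_eq : condEntropy μ Y (fun ω => (X ω, θψ ω)) = condEntropy μ Y (fun ω => (X ω, θg ω)) :=
    condEntropy_eq_of_ae_eq_comp Y (e := fun p => (p.1, h p, p.2))
      (hh.mono fun ω hω => congrArg (fun t => (X ω, t, θg ω)) hω)
      (Function.LeftInverse.injective (g := fun q => (q.1, q.2.2)) fun _ => rfl)
  rw [hZ_eq, hZI_eq, hθ_eq] at hgap
  linarith

/-- The paper's lower bound `D(Z)` on the Steinmetz objective
`J(Z) = I(X;Z) − I(Y;Z) + I(S;θ_ψ)`: assuming the i.i.d. sample entropy identities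
`H(S) = M·H(X,Y)` and `H(S|θ_ψ) = M·H(X,Y|θ_ψ)`, one has `J ≥ D` where
`D = H(Z_R) − I(Y;Z) + M·[H(Y) + H(X_R|Y) + H(X_I|X_R,Z_I,Y) − H(X|θ_ψ) − H(Y|X,θ_g)]`,
with equality if `Z_I` is almost surely a deterministic function of `Z_R` and `θ_f` is
almost surely a function of `(X, θ_g)`. -/
theorem steinmetz_lower_bound {Ω A B C A' B' Tf Tg Ts : Type*} [MeasurableSpace Ω]
    [Fintype A] [Fintype B] [Fintype C] [Fintype A'] [Fintype B']
    [Fintype Tf] [Fintype Tg] [Fintype Ts]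
    [MeasurableSpace A] [DiscreteMeasurableSpace A] [MeasurableSpace B] [DiscreteMeasurableSpace B]
    [MeasurableSpace C] [DiscreteMeasurableSpace C]
    [MeasurableSpace Tf] [DiscreteMeasurableSpace Tf]
    [MeasurableSpace Tg] [DiscreteMeasurableSpace Tg]
    [MeasurableSpace Ts] [DiscreteMeasurableSpace Ts]
    (μ : Measure Ω) [IsProbabilityMeasure μ]
    (XR : Ω → A) (XI : Ω → B) (Y : Ω → C) (θf : Ω → Tf) (θg : Ω → Tg) (S : Ω → Ts)
    (hXR : Measurable XR) (hXI : Measurable XI) (hY : Measurable Y)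
    (hθf : Measurable θf) (hθg : Measurable θg) (hS : Measurable S)
    (g : A → A') (f : B → B') (M : ℕ) (hM : 1 ≤ M) :
    let ZR : Ω → A' := fun ω => g (XR ω)
    let ZI : Ω → B' := fun ω => f (XI ω)
    let X : Ω → A × B := fun ω => (XR ω, XI ω)
    let Z : Ω → A' × B' := fun ω => (ZR ω, ZI ω)
    let θψ : Ω → Tf × Tg := fun ω => (θf ω, θg ω)
    let J : ℝ := mutualInfo μ X Z - mutualInfo μ Y Z + mutualInfo μ S θψ
    let D : ℝ := entropy μ ZR - mutualInfo μ Y Z +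
      (M : ℝ) * (entropy μ Y + condEntropy μ XR Y +
        condEntropy μ XI (fun ω => (XR ω, ZI ω, Y ω)) -
        condEntropy μ X θψ - condEntropy μ Y (fun ω => (X ω, θg ω)))
    entropy μ S = (M : ℝ) * entropy μ (fun ω => (X ω, Y ω)) →
    condEntropy μ S θψ = (M : ℝ) * condEntropy μ (fun ω => (X ω, Y ω)) θψ →
    D ≤ J ∧
      ((∃ φ : A' → B', ∀ᵐ ω ∂μ, ZI ω = φ (ZR ω)) →
       (∃ h : (A × B) × Tg → Tf, ∀ᵐ ω ∂μ, θf ω = h (X ω, θg ω)) →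
       J = D) :=
  steinmetz_lower_bound_general μ XR XI Y θf θg S hXR hXI hY hθf hθg g f M
end
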